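/- In the concrete quasi-free CAR model with past P = {n ∈ ℤ : n < 0} and future F = {n ∈ ℤ : n ≥ 0}, with λ : ℤ → ℝ, 0 < λ_l < 1: let H₀ := ℓ²(Finset ℕ × Finset ℕ) with orthonormal basis (e⁰_{(A,B)}) indexed by pairs of finite subsets of ℕ, and let a⁰_l (l ∈ ℕ) be the operators on H₀ defined by the same formulas as a_l using λ restricted to ℕ ⊆ ℤ. Let I₁, I₂ be finite subsets of P with card I₁ ≡ card I₂ (mod 2), and let T = T_{I₁I₂} : H₀ → H be the bounded linear operator determined by T e⁰_{(A,B)} = (−1)^{card I₂ · card B}·e_{(I₁ ∪ A, I₂ ∪ B)} (where A, B ⊆ ℕ are regarded as subsets of ℤ via ℕ ⊆ ℤ). Then for every l ∈ ℕ: a_l ∘ T = T ∘ a⁰_l and a_l* ∘ T = T ∘ (a⁰_l)*. (These operators T_{I₁I₂} are common intertwiners of the CAR flow α_t and of its commutant flow; they span the fibre H_t of the super product system of the CAR flow.) -/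

import Mathlib

/-!
`T` puts the modes `I₁, I₂ ⊆ P` in front of every basis vector, and all of them lie below every
`l ∈ ℕ`. Hence moving `a_l` or `a_l*` past `T` only changes the Jordan–Wigner signs: `n(l, ·)`
grows by `#I₁` on the `A`-component and by `#I₂` on the `B`-component, and `#B` grows by `#I₂`.
On the terms that change `A` the extra sign is `(-1)^(#I₁ + #I₂) = 1` by the parity
hypothesis; on the terms that change `B` the extra `(-1)^#I₂` is exactly the change of the
prefactor `(-1)^(#I₂ * #B)` of `T` when `#B` moves by one. Since the coefficients are real, `a_l*` is
given on the basis by the transposed formulas, and the same computation applies to it.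
-/

noncomputable section

abbrev FockSpace (α : Type) : Type := lp (fun _ : Finset α × Finset α => ℂ) 2

def fockE {α : Type} [DecidableEq α] (p : Finset α × Finset α) : FockSpace α :=
  lp.single 2 p 1

def nlt {α : Type} [LinearOrder α] (l : α) (X : Finset α) : ℕ :=
  (X.filter fun j => j < l).card

def IsCAR_a {α : Type} [LinearOrder α] (lam : α → ℝ)
    (a : α → FockSpace α →L[ℂ] FockSpace α) : Prop :=
  ∀ (l : α) (A B : Finset α),
    a l (fockE (A, B)) =
      ((Real.sqrt (1 - lam l) : ℂ) * (-1) ^ B.card * (-1) ^ nlt l A *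
          (if l ∈ A then 0 else 1)) • fockE (insert l A, B) +
      ((Real.sqrt (lam l) : ℂ) * (-1) ^ nlt l B *
          (if l ∈ B then 1 else 0)) • fockE (A, B.erase l)

open Finset ContinuousLinearMap

section Basis

variable {α : Type} [DecidableEq α]

lemma inner_fockE_left (p : Finset α × Finset α) (f : FockSpace α) :
    inner ℂ (fockE p) f = f p := by
  simp [fockE, lp.inner_single_left]

lemma inner_fockE_fockE (p q : Finset α × Finset α) :
    inner ℂ (fockE p) (fockE q) = if p = q then 1 else 0 := by
  rw [inner_fockE_left]
  simp [fockE, Pi.single_apply]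

lemma FockSpace.ext_inner_fockE {v w : FockSpace α}
    (h : ∀ p, inner ℂ (fockE p) v = inner ℂ (fockE p) w) : v = w :=
  lp.ext <| funext fun p => by simpa [inner_fockE_left] using h p

lemma FockSpace.continuousLinearMap_ext {F : Type} [NormedAddCommGroup F] [NormedSpace ℂ F]
    {S₁ S₂ : FockSpace α →L[ℂ] F} (h : ∀ p, S₁ (fockE p) = S₂ (fockE p)) : S₁ = S₂ :=
  lp.ext_continuousLinearMap ENNReal.ofNat_ne_top fun p => ext_ring (h p)

end Basis

lemma Finset.notMem_and_insert_eq_iff {α : Type} [DecidableEq α] {a : α} {s t : Finset α} :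
    a ∉ s ∧ insert a s = t ↔ a ∈ t ∧ s = t.erase a := by
  constructor
  · rintro ⟨ha, rfl⟩
    exact ⟨mem_insert_self a s, (erase_insert ha).symm⟩
  · rintro ⟨ha, rfl⟩
    exact ⟨notMem_erase a t, insert_erase ha⟩

section QuasiFree

variable {α : Type} [LinearOrder α]

lemma nlt_erase_self (l : α) (X : Finset α) : nlt l (X.erase l) = nlt l X := by
  rw [nlt, nlt, filter_erase, erase_eq_of_notMem (by simp)]

theorem IsCAR_a.adjoint_apply_fockE {lam : α → ℝ} {a : α → FockSpace α →L[ℂ] FockSpace α}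
    (ha : IsCAR_a lam a) (l : α) (A B : Finset α) :
    adjoint (a l) (fockE (A, B)) =
      ((Real.sqrt (1 - lam l) : ℂ) * (-1) ^ B.card * (-1) ^ nlt l A *
          (if l ∈ A then 1 else 0)) • fockE (A.erase l, B) +
      ((Real.sqrt (lam l) : ℂ) * (-1) ^ nlt l B *
          (if l ∈ B then 0 else 1)) • fockE (A, insert l B) := by
  refine FockSpace.ext_inner_fockE fun ⟨C, D⟩ => ?_
  rw [adjoint_inner_right, ha, inner_add_left, inner_add_right, inner_smul_left, inner_smul_left,
    inner_smul_right, inner_smul_right]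
  simp only [inner_fockE_fockE, Prod.mk.injEq, map_mul, map_pow, map_neg, map_one,
    Complex.conj_ofReal, apply_ite (starRingEnd ℂ), map_zero, mul_ite, mul_one, mul_zero,
    ← ite_and]
  congr 1
  · by_cases h : (C = A.erase l ∧ D = B) ∧ l ∈ A
    · obtain ⟨⟨rfl, rfl⟩, hA⟩ := h
      simp [hA, insert_erase hA, nlt_erase_self]
    · rw [if_neg h]
      refine ite_eq_right_iff.2 fun hCD => if_pos (by_contra fun hC => h ?_)
      obtain ⟨hA, rfl⟩ := notMem_and_insert_eq_iff.1 ⟨hC, hCD.1⟩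
      exact ⟨⟨rfl, hCD.2⟩, hA⟩
  · by_cases h : (C = A ∧ D.erase l = B) ∧ l ∈ D
    · obtain ⟨⟨rfl, rfl⟩, hD⟩ := h
      simp [hD, insert_erase hD, nlt_erase_self]
    · rw [if_neg h, eq_comm]
      refine ite_eq_right_iff.2 fun hCD => if_pos (by_contra fun hB => h ?_)
      obtain ⟨hD, rfl⟩ := notMem_and_insert_eq_iff.1 ⟨hB, hCD.2.symm⟩
      exact ⟨⟨hCD.1, rfl⟩, hD⟩

end QuasiFree

section Past

variable {I : Finset ℤ}

lemma natCast_notMem_of_forall_neg (hI : ∀ n ∈ I, n < 0) (l : ℕ) : (l : ℤ) ∉ I :=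
  fun h => (hI _ h).not_ge (Int.natCast_nonneg l)

lemma natCast_mem_union_image_iff (hI : ∀ n ∈ I, n < 0) (l : ℕ) (A : Finset ℕ) :
    (l : ℤ) ∈ I ∪ A.image (fun n : ℕ => (n : ℤ)) ↔ l ∈ A := by
  simp [natCast_notMem_of_forall_neg hI l]

lemma erase_union_image (hI : ∀ n ∈ I, n < 0) (l : ℕ) (A : Finset ℕ) :
    (I ∪ A.image (fun n : ℕ => (n : ℤ))).erase (l : ℤ) =
      I ∪ (A.erase l).image (fun n : ℕ => (n : ℤ)) := by
  rw [erase_union_distrib, erase_eq_of_notMem (natCast_notMem_of_forall_neg hI l),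
    image_erase Nat.cast_injective]

lemma card_union_image (hI : ∀ n ∈ I, n < 0) (A : Finset ℕ) :
    #(I ∪ A.image (fun n : ℕ => (n : ℤ))) = #I + #A := by
  rw [card_union_of_disjoint, card_image_of_injective _ Nat.cast_injective]
  simp only [disjoint_left, mem_image, not_exists, not_and]
  exact fun x hx n _ hn => (hI x hx).not_ge (hn ▸ Int.natCast_nonneg n)

lemma nlt_union_image (hI : ∀ n ∈ I, n < 0) (l : ℕ) (A : Finset ℕ) :
    nlt (l : ℤ) (I ∪ A.image (fun n : ℕ => (n : ℤ))) = #I + nlt l A := by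
  have hI_lt : ∀ n ∈ I, n < l := fun n hn => (hI n hn).trans_le (Int.natCast_nonneg l)
  rw [nlt, filter_union, filter_true_of_mem hI_lt, filter_image, nlt, ← card_union_image hI]
  simp

end Past

/-- `T` is the paper's `T_{I₁I₂}`. -/
def AdjoinsPast (I₁ I₂ : Finset ℤ) (T : FockSpace ℕ →L[ℂ] FockSpace ℤ) : Prop :=
  ∀ A B : Finset ℕ, T (fockE (A, B)) = (-1 : ℂ) ^ (#I₂ * #B) •
    fockE (I₁ ∪ A.image (fun n : ℕ => (n : ℤ)), I₂ ∪ B.image (fun n : ℕ => (n : ℤ)))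

section Intertwiner

variable {lam : ℤ → ℝ} {a : ℤ → FockSpace ℤ →L[ℂ] FockSpace ℤ}
  {a0 : ℕ → FockSpace ℕ →L[ℂ] FockSpace ℕ} {I₁ I₂ : Finset ℤ}
  {T : FockSpace ℕ →L[ℂ] FockSpace ℤ}

lemma IsCAR_a.comp_eq_comp_of_adjoinsPast (ha : IsCAR_a lam a)
    (ha0 : IsCAR_a (fun n : ℕ => lam n) a0) (hI₁ : ∀ n ∈ I₁, n < 0) (hI₂ : ∀ n ∈ I₂, n < 0)
    (hsign : (-1 : ℂ) ^ #I₁ = (-1) ^ #I₂) (hT : AdjoinsPast I₁ I₂ T) (l : ℕ) :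
    a l ∘L T = T ∘L a0 l := by
  refine FockSpace.continuousLinearMap_ext fun ⟨A, B⟩ => ?_
  rw [comp_apply, comp_apply, hT, map_smul, ha, ha0, map_add, map_smul, map_smul, hT, hT]
  simp only [natCast_mem_union_image_iff hI₁, natCast_mem_union_image_iff hI₂, image_insert,
    union_insert, erase_union_image hI₂, card_union_image hI₂, nlt_union_image hI₁,
    nlt_union_image hI₂, smul_add, smul_smul]
  congr 2
  · rw [pow_add, pow_add, hsign]
    ring_nf
    simp
  · by_cases hB : l ∈ B
    · rw [← card_erase_add_one hB]
      ring_nf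
      simp
    · simp [hB]

lemma IsCAR_a.adjoint_comp_eq_comp_of_adjoinsPast (ha : IsCAR_a lam a)
    (ha0 : IsCAR_a (fun n : ℕ => lam n) a0) (hI₁ : ∀ n ∈ I₁, n < 0) (hI₂ : ∀ n ∈ I₂, n < 0)
    (hsign : (-1 : ℂ) ^ #I₁ = (-1) ^ #I₂) (hT : AdjoinsPast I₁ I₂ T) (l : ℕ) :
    adjoint (a l) ∘L T = T ∘L adjoint (a0 l) := by
  refine FockSpace.continuousLinearMap_ext fun ⟨A, B⟩ => ?_
  rw [comp_apply, comp_apply, hT, map_smul, ha.adjoint_apply_fockE, ha0.adjoint_apply_fockE,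
    map_add, map_smul, map_smul, hT, hT]
  simp only [natCast_mem_union_image_iff hI₁, natCast_mem_union_image_iff hI₂, image_insert,
    union_insert, erase_union_image hI₁, card_union_image hI₂, nlt_union_image hI₁,
    nlt_union_image hI₂, smul_add, smul_smul]
  congr 2
  · rw [pow_add, pow_add, hsign]
    ring_nf
    simp
  · by_cases hB : l ∈ B
    · simp [hB]
    · rw [card_insert_of_notMem hB]
      ring

end Intertwiner

theorem stmt19_general (lam : ℤ → ℝ)
    (a : ℤ → FockSpace ℤ →L[ℂ] FockSpace ℤ) (ha : IsCAR_a lam a)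
    (a0 : ℕ → FockSpace ℕ →L[ℂ] FockSpace ℕ)
    (ha0 : IsCAR_a (fun n : ℕ => lam (n : ℤ)) a0)
    (I₁ I₂ : Finset ℤ) (hI₁ : ∀ n ∈ I₁, n < 0) (hI₂ : ∀ n ∈ I₂, n < 0)
    (hpar : I₁.card % 2 = I₂.card % 2)
    (T : FockSpace ℕ →L[ℂ] FockSpace ℤ)
    (hT : ∀ A B : Finset ℕ, T (fockE (A, B)) =
      ((-1 : ℂ) ^ (I₂.card * B.card)) •
        fockE (I₁ ∪ A.image (fun n : ℕ => (n : ℤ)), I₂ ∪ B.image (fun n : ℕ => (n : ℤ)))) :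
    ∀ l : ℕ,
      (a (l : ℤ)) ∘L T = T ∘L a0 l ∧
      ContinuousLinearMap.adjoint (a (l : ℤ)) ∘L T =
        T ∘L ContinuousLinearMap.adjoint (a0 l) := by
  have hsign : (-1 : ℂ) ^ I₁.card = (-1) ^ I₂.card :=
    neg_one_pow_congr (by simp [Nat.even_iff, hpar])
  exact fun l => ⟨ha.comp_eq_comp_of_adjoinsPast ha0 hI₁ hI₂ hsign hT l,
    ha.adjoint_comp_eq_comp_of_adjoinsPast ha0 hI₁ hI₂ hsign hT l⟩

/-- let `I₁, I₂` be finite subsets of the past `P = {n < 0}` with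
`card I₁ ≡ card I₂ (mod 2)`, and let `T = T_{I₁I₂} : H₀ → H` be the bounded operator
determined by `T e⁰_{(A,B)} = (−1)^{card I₂ · card B}·e_{(I₁∪A, I₂∪B)}` (subsets of `ℕ`
regarded as subsets of `ℤ`).  Then for every `l ∈ ℕ`:
`a_l ∘ T = T ∘ a⁰_l` and `a_l* ∘ T = T ∘ (a⁰_l)*`. -/
theorem stmt19 (lam : ℤ → ℝ) (hlam : ∀ l, 0 < lam l ∧ lam l < 1)
    (a : ℤ → FockSpace ℤ →L[ℂ] FockSpace ℤ) (ha : IsCAR_a lam a)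
    (a0 : ℕ → FockSpace ℕ →L[ℂ] FockSpace ℕ)
    (ha0 : IsCAR_a (fun n : ℕ => lam (n : ℤ)) a0)
    (I₁ I₂ : Finset ℤ) (hI₁ : ∀ n ∈ I₁, n < 0) (hI₂ : ∀ n ∈ I₂, n < 0)
    (hpar : I₁.card % 2 = I₂.card % 2)
    (T : FockSpace ℕ →L[ℂ] FockSpace ℤ)
    (hT : ∀ A B : Finset ℕ, T (fockE (A, B)) =
      ((-1 : ℂ) ^ (I₂.card * B.card)) •
        fockE (I₁ ∪ A.image (fun n : ℕ => (n : ℤ)), I₂ ∪ B.image (fun n : ℕ => (n : ℤ)))) :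
    ∀ l : ℕ,
      (a (l : ℤ)) ∘L T = T ∘L a0 l ∧
      ContinuousLinearMap.adjoint (a (l : ℤ)) ∘L T =
        T ∘L ContinuousLinearMap.adjoint (a0 l) :=
  stmt19_general lam a ha a0 ha0 I₁ I₂ hI₁ hI₂ hpar T hT

end
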